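/- Let C be a Suslin scheme in a topological space Y all of whose sets C(s) are closed in Y, and let T be a well-founded tree on ω with leaf-rank r_l(T) = λ + n, where λ is a limit ordinal or 0 and n is finite. Then: (i) R_T(C) ∈ F_{λ+2n}(Y); (ii) if the root ∅ has only finitely many immediate successors in T, then R_T(C) ∈ F_{λ+2n−1}(Y). -/

import Mathlib

noncomputable section
open Classical Set Topology Filter Ordinal

universe u v

namespace FBorelPaper

/-! ### Ordinal parity -/

/-- The first uncountable ordinal. -/
def omega1 : Ordinal.{0} := Ordinal.omega 1

/-- An ordinal `a = λ + m` (with `λ` limit or zero, `m < ω`) is *even* iff `m` is even. -/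
def EvenOrd (a : Ordinal.{0}) : Prop := a % 2 = 0

/-- An ordinal `a = λ + m` (with `λ` limit or zero, `m < ω`) is *odd* iff `m` is odd. -/
def OddOrd (a : Ordinal.{0}) : Prop := a % 2 = 1

/-- For `a = λ + 2n + i` (with `λ` limit or zero, `n < ω`, `i ∈ {0,1}`),
`ordPrime a = λ + n` (the ordinal `α'` of the paper). -/
def ordPrime (a : Ordinal.{0}) : Ordinal.{0} :=
  Ordinal.omega0 * (a / Ordinal.omega0) + (a % Ordinal.omega0) / 2

/-! ### The F-Borel hierarchy -/

/-- The `F`-Borel hierarchy of a topological space: `FBorel Y 0` is the family of closed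
sets, and for `0 < a`, `FBorel Y a` consists of all countable unions (for odd `a`),
resp. countable intersections (for even `a`), of members of `⋃ b < a, FBorel Y b`. -/
def FBorel (Y : Type u) [TopologicalSpace Y] : Ordinal.{0} → Set (Set Y) :=
  WellFounded.fix Ordinal.lt_wf (C := fun _ => Set (Set Y)) fun a ih =>
    if a = 0 then { F | IsClosed F }
    else if EvenOrd a then
      { S | ∃ f : ℕ → Set Y, (∀ n, ∃ b, ∃ h : b < a, f n ∈ ih b h) ∧ S = ⋂ n, f n }
    else
      { S | ∃ f : ℕ → Set Y, (∀ n, ∃ b, ∃ h : b < a, f n ∈ ih b h) ∧ S = ⋃ n, f n }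

/-- The list `(σ 0, …, σ (k-1))` of the first `k` values of `σ : ℕ → ℕ`. -/
def seqPrefix (σ : ℕ → ℕ) (k : ℕ) : List ℕ := List.ofFn fun i : Fin k => σ i

/-- A Suslin scheme: a monotone family of sets indexed by finite sequences. -/
def IsSuslinScheme {Y : Type u} (C : List ℕ → Set Y) : Prop :=
  ∀ ⦃s t : List ℕ⦄, s <+: t → C t ⊆ C s

/-- The Suslin operation `A(C) = ⋃_{σ ∈ ω^ω} ⋂_k C(σ|k)`. -/
def suslinOp {Y : Type u} (C : List ℕ → Set Y) : Set Y :=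
  ⋃ σ : ℕ → ℕ, ⋂ k : ℕ, C (seqPrefix σ k)

/-- The Suslin-F subsets of `Y`: results of the Suslin operation applied to schemes of
closed sets. -/
def SuslinF (Y : Type u) [TopologicalSpace Y] : Set (Set Y) :=
  { S | ∃ C : List ℕ → Set Y, (∀ s, IsClosed (C s)) ∧ S = suslinOp C }

/-- The classes `F_a(Y)` for `a ≤ ω₁`, where `F_{ω₁}(Y)` is the class of Suslin-F sets. -/
def FClass (Y : Type u) [TopologicalSpace Y] (a : Ordinal.{0}) : Set (Set Y) :=
  if a < omega1 then FBorel Y a else SuslinF Y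

/-- `ComplIn Y X` is the complexity of `X` in `Y`: the least `a ≤ ω₁` with `X ∈ F_a(Y)`. -/
def ComplIn (Y : Type u) [TopologicalSpace Y] (X : Set Y) : Ordinal.{0} :=
  sInf { a : Ordinal.{0} | a ≤ omega1 ∧ X ∈ FClass Y a }

/-! ### Compactifications, K-analytic spaces, local complexity -/

/-- `(K, e)` is a compactification of `X`: `K` is compact Hausdorff and `e` is a dense
embedding of `X` into `K`. -/
def IsCompactification (X : Type u) [TopologicalSpace X] (K : Type u) [TopologicalSpace K]
    (e : X → K) : Prop :=
  CompactSpace K ∧ T2Space K ∧ IsEmbedding e ∧ DenseRange e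

/-- The set `Compl(X)` of all complexities attained by `X` in its compactifications. -/
def AttainedCompl (X : Type u) [TopologicalSpace X] : Set Ordinal.{0} :=
  { γ | ∃ (K : Type u) (_ : TopologicalSpace K) (e : X → K),
      IsCompactification X K e ∧ Set.range e ∈ SuslinF K ∧ γ = ComplIn K (Set.range e) }

/-- A topological space is K-analytic iff it embeds as a Suslin-F subset of some compact
Hausdorff space. -/
def IsKAnalytic (X : Type u) [TopologicalSpace X] : Prop :=
  ∃ (K : Type u) (_ : TopologicalSpace K) (e : X → K),
    CompactSpace K ∧ T2Space K ∧ IsEmbedding e ∧ Set.range e ∈ SuslinF K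

/-- The local complexity `Compl_y(X, Y)`: the least complexity of `cl(U) ∩ X` in `Y` over
all open neighborhoods `U` of `y` in `Y`. -/
def locComplAt (Y : Type u) [TopologicalSpace Y] (X : Set Y) (y : Y) : Ordinal.{0} :=
  sInf { γ : Ordinal.{0} | ∃ U : Set Y, IsOpen U ∧ y ∈ U ∧ γ = ComplIn Y (closure U ∩ X) }

/-- The local complexity `Compl_loc(X, Y) = sup_{x ∈ X} Compl_x(X, Y)`. -/
def locCompl (Y : Type u) [TopologicalSpace Y] (X : Set Y) : Ordinal.{0} :=
  ⨆ x : X, locComplAt Y X (x : Y)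

/-- The local complexity `Compl_locbar(X, Y) = sup_{y ∈ Y} Compl_y(X, Y)`. -/
def locComplBar (Y : Type u) [TopologicalSpace Y] (X : Set Y) : Ordinal.{0} :=
  ⨆ y : Y, locComplAt Y X y

/-! ### Trees on ω -/

/-- A tree on `ω`: a set of finite sequences closed under initial segments. -/
def IsTree (T : Set (List ℕ)) : Prop := ∀ ⦃s t : List ℕ⦄, s <+: t → t ∈ T → s ∈ T

/-- A tree is well-founded iff it carries no infinite branch. -/
def WellFoundedTree (T : Set (List ℕ)) : Prop := ¬ ∃ σ : ℕ → ℕ, ∀ k : ℕ, seqPrefix σ k ∈ T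

/-- `t` is a leaf of `T`: it belongs to `T` and has no immediate successor in `T`. -/
def IsLeafOf (T : Set (List ℕ)) (t : List ℕ) : Prop := t ∈ T ∧ ∀ n : ℕ, t ++ [n] ∉ T

/-- The tree `T^t = {s | t⌢s ∈ T}` corresponding to `t` in `T`. -/
def subtreeAt (T : Set (List ℕ)) (t : List ℕ) : Set (List ℕ) := { s | t ++ s ∈ T }

/-- The smallest tree containing a set `S` of finite sequences. -/
def clTr (S : Set (List ℕ)) : Set (List ℕ) := { u | ∃ s ∈ S, u <+: s }

/-- The leaf derivative: keep the elements having some proper extension in `T`. -/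
def leafDeriv (T : Set (List ℕ)) : Set (List ℕ) := { t ∈ T | ∃ s ∈ T, t <+: s ∧ t ≠ s }

/-- The derivative `D_iie`: keep the `t ∈ T` admitting infinitely many pairwise
incomparable extensions in `T` of pairwise different lengths. -/
def Diie (T : Set (List ℕ)) : Set (List ℕ) :=
  { t ∈ T | ∃ g : ℕ → List ℕ, (∀ n, g n ∈ T ∧ t <+: g n) ∧
      ∀ ⦃m n : ℕ⦄, m < n →
        (¬ g m <+: g n) ∧ (¬ g n <+: g m) ∧ (g m).length ≠ (g n).length }

/-- Transfinitely iterated derivative, starting from `cl_Tr S` and taking intersections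
at limit stages. -/
def iterDeriv (D : Set (List ℕ) → Set (List ℕ)) (S : Set (List ℕ)) (γ : Ordinal.{0}) :
    Set (List ℕ) :=
  Ordinal.limitRecOn γ (clTr S) (fun _ ih => D ih)
    (fun a _ ih => ⋂ b : Ordinal.{0}, ⋂ h : b < a, ih b h)

/-- The rank associated with the leaf derivative: the least `γ` such that the `(γ+1)`-st
iterated leaf derivative is empty, and `ω₁` if there is no such countable ordinal. -/
def leafRank (T : Set (List ℕ)) : Ordinal.{0} :=
  if ∃ γ : Ordinal.{0}, γ < omega1 ∧ iterDeriv leafDeriv T (γ + 1) = ∅ then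
    sInf { γ : Ordinal.{0} | iterDeriv leafDeriv T (γ + 1) = ∅ }
  else omega1

/-- `E` is the canonical extension of the `l(T)`-scheme `H` to the whole of `T`:
it agrees with `H` on the leaves of `T`, and at a non-leaf `t ∈ T` it is the union
(resp. the intersection) of its values at the immediate successors of `t` in `T` when
the leaf-rank of `T^t` is odd (resp. even). -/
def IsSchemeExtension (Y : Type u) [TopologicalSpace Y] (T : Set (List ℕ))
    (H E : List ℕ → Set Y) : Prop :=
  (∀ t, IsLeafOf T t → E t = H t) ∧
  (∀ t ∈ T, ¬ IsLeafOf T t → OddOrd (leafRank (subtreeAt T t)) →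
      E t = ⋃ n ∈ { n : ℕ | t ++ [n] ∈ T }, E (t ++ [n])) ∧
  (∀ t ∈ T, ¬ IsLeafOf T t → EvenOrd (leafRank (subtreeAt T t)) →
      E t = ⋂ n ∈ { n : ℕ | t ++ [n] ∈ T }, E (t ++ [n]))

/-- `H` (an `l(T)`-scheme of subsets of `X`) is a *universal simple `F_α`-representation*
of `X`: `r_l(T) ≤ α`, and for every space `Y` containing (a copy of) `X`, the extension
of the scheme of closures `(cl_Y (H t))_t` computes `X` at the root. -/
def HasUniversalSimpleRep (X : Type u) [TopologicalSpace X] (α : Ordinal.{0}) : Prop :=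
  ∃ (T : Set (List ℕ)) (H : List ℕ → Set X), IsTree T ∧ WellFoundedTree T ∧ [] ∈ T ∧
    leafRank T ≤ α ∧
    ∀ (Y : Type u) (_ : TopologicalSpace Y) (e : X → Y), IsEmbedding e →
      ∃ E : List ℕ → Set Y,
        IsSchemeExtension Y T (fun t => closure (e '' H t)) E ∧ E [] = Set.range e

/-! ### Canonical trees -/

/-- Auxiliary indices for the canonical trees: at a successor `a = b + 1` every index is
`b`, and at a countable limit the indices enumerate all ordinals `< a` injectively. -/
def canonIdx (a : Ordinal.{0}) (n : ℕ) : Ordinal.{0} :=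
  if hs : ∃ b, a = b + 1 then hs.choose
  else if hf : ∃ f : ℕ → Ordinal.{0}, Function.Injective f ∧ Set.range f = Set.Iio a then
    hf.choose n
  else 0

theorem canonIdx_lt {a : Ordinal.{0}} (h0 : a ≠ 0) (n : ℕ) : canonIdx a n < a := by
  unfold canonIdx
  split
  · next hs =>
      conv_rhs => rw [hs.choose_spec]
      rw [Ordinal.add_one_eq_succ]
      exact Order.lt_succ _
  · split
    · next hf =>
        have hmem : hf.choose n ∈ Set.range hf.choose := Set.mem_range_self n
        rw [hf.choose_spec.2] at hmem
        exact hmem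
    · exact pos_iff_ne_zero.mpr h0

/-- The canonical "maximal" trees `T_α` of leaf-rank `α < ω₁` (with `T_α = ω^{<ω}` for
`α ≥ ω₁`): `T_0 = {∅}`, `T_{α+1} = {∅} ∪ ⋃_n n⌢T_α`, and at countable limits
`T_α = {∅} ∪ ⋃_n n⌢T_{π_α(n)}` for an injective enumeration `π_α` of `α`. -/
def canonTree : Ordinal.{0} → Set (List ℕ) :=
  WellFounded.fix Ordinal.lt_wf (C := fun _ => Set (List ℕ)) fun a ih =>
    if h0 : a = 0 then {([] : List ℕ)}
    else if omega1 ≤ a then Set.univ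
    else {([] : List ℕ)} ∪ ⋃ n : ℕ, (List.cons n) '' ih (canonIdx a n) (canonIdx_lt h0 n)

/-- The canonical trees `T^c_α`: `T_{α'}` for even `α`, and `{∅} ∪ 1⌢T_{α'}` for odd `α`. -/
def canonTreeC (a : Ordinal.{0}) : Set (List ℕ) :=
  if EvenOrd a then canonTree (ordPrime a)
  else {([] : List ℕ)} ∪ (List.cons 1) '' canonTree (ordPrime a)

/-- The canonical trees `T^c_{α,i} = {∅} ∪ i⌢T_{α'}` (for odd `α`). -/
def canonTreeCi (a : Ordinal.{0}) (i : ℕ) : Set (List ℕ) :=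
  {([] : List ℕ)} ∪ (List.cons i) '' canonTree (ordPrime a)

/-! ### Admissible maps, `R_T` and regular representations -/

/-- An admissible map on a tree `T`: monotone w.r.t. extension, with
`|φ(t)| = t(0) + ⋯ + t(|t|-1)` for all `t ∈ T`. -/
def Admissible (T : Set (List ℕ)) (φ : List ℕ → List ℕ) : Prop :=
  (∀ ⦃s t : List ℕ⦄, s ∈ T → t ∈ T → s <+: t → φ s <+: φ t) ∧
  (∀ t ∈ T, (φ t).length = t.sum)

/-- `R_T(C)`: the points of `C(∅)` admitting an admissible witness map along `T`. -/
def RT {Y : Type u} (T : Set (List ℕ)) (C : List ℕ → Set Y) : Set Y :=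
  { x | x ∈ C [] ∧ ∃ φ : List ℕ → List ℕ, Admissible T φ ∧ ∀ t ∈ T, x ∈ C (φ t) }

/-- `R_α(C) = R_{T^c_α}(C)`. -/
def Ralpha {Y : Type u} (a : Ordinal.{0}) (C : List ℕ → Set Y) : Set Y :=
  RT (canonTreeC a) C

/-- A Suslin scheme `C` of subsets of `X ⊆ Y` is *complete on `X`*: it is a Suslin scheme
on `X` (it consists of subsets of `X` and the Suslin operation applied to it covers `X`)
such that every nontrivial filter containing, for each `n`, a set `C s` with `|s| = n`,
has an accumulation point in `X`. -/
def IsCompleteOn (Y : Type u) [TopologicalSpace Y] (X : Set Y) (C : List ℕ → Set Y) :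
    Prop :=
  IsSuslinScheme C ∧ (∀ s, C s ⊆ X) ∧ X ⊆ suslinOp C ∧
  ∀ F : Filter Y, F.NeBot → (∀ n : ℕ, ∃ s : List ℕ, s.length = n ∧ C s ∈ F) →
    ∃ x ∈ X, ClusterPt x F

/-- The tree `S_C(y)` of finite sequences `s` with `y ∈ cl_Y (C s)`. -/
def SCtree (Y : Type u) [TopologicalSpace Y] (C : List ℕ → Set Y) (y : Y) :
    Set (List ℕ) :=
  { s : List ℕ | y ∈ closure (C s) }

/-! ### Zoom spaces -/

/-- The set of isolated points of a topological space. -/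
def IsolPts (Y : Type u) [TopologicalSpace Y] : Set Y := { y | IsOpen ({y} : Set Y) }

/-- The underlying set of the zoom space `Z(Y, X)`: the non-isolated points of `Y`
together with the disjoint union of the spaces `X i`, `i ∈ I_Y`. -/
def ZoomCarrier (Y : Type u) [TopologicalSpace Y] (X : IsolPts Y → Type v) :
    Type (max u v) :=
  ({ y : Y // y ∉ IsolPts Y }) ⊕ ((i : IsolPts Y) × X i)

/-- The basic set `V_U ⊆ Z(Y, X)` associated with `U ⊆ Y`:
`V_U = (U ∖ I_Y) ∪ ⋃ {X i | i ∈ U ∩ I_Y}`. -/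
def zoomVSet (Y : Type u) [TopologicalSpace Y] (X : IsolPts Y → Type v) (U : Set Y) :
    Set (ZoomCarrier Y X) :=
  { z | Sum.elim (fun y : { y : Y // y ∉ IsolPts Y } => (y : Y) ∈ U)
      (fun p : (i : IsolPts Y) × X i => (p.1 : Y) ∈ U) z }

/-- The topology of the zoom space `Z(Y, X)`, generated by the open subsets of the
spaces `X i` together with the sets `V_U` for `U` open in `Y`. -/
instance zoomTopology (Y : Type u) [TopologicalSpace Y] (X : IsolPts Y → Type v)
    [∀ i, TopologicalSpace (X i)] : TopologicalSpace (ZoomCarrier Y X) :=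
  TopologicalSpace.generateFrom
    ({ B | ∃ (i : IsolPts Y) (W : Set (X i)), IsOpen W ∧
        B = Sum.inr '' ((Sigma.mk i) '' W) } ∪
     { B | ∃ U : Set Y, IsOpen U ∧ B = zoomVSet Y X U })

/-- The subset of `Z(Y, X)` which is the underlying set of the zoom space `Z(Ys, A)` of
a subspace `Ys ⊆ Y` with respect to subspaces `A i ⊆ X i`
(here the isolated points of `Ys` are identified with those of `Y`). -/
def zoomSub (Y : Type u) [TopologicalSpace Y] (X : IsolPts Y → Type v) (Ys : Set Y)
    (A : ∀ i : IsolPts Y, Set (X i)) : Set (ZoomCarrier Y X) :=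
  { z | Sum.elim (fun y : { y : Y // y ∉ IsolPts Y } => (y : Y) ∈ Ys)
      (fun p : (i : IsolPts Y) × X i => p.2 ∈ A p.1) z }

/-! ### Broom sets and broom spaces -/

/-- A forking sequence: a sequence of nonempty finite sequences with pairwise distinct
first entries. -/
def IsForking (f : ℕ → List ℕ) : Prop :=
  (∀ n, f n ≠ []) ∧ ∀ ⦃m n : ℕ⦄, m ≠ n → (f m).head? ≠ (f n).head?

/-- The hierarchy of finite broom sets: `B ∈ B_α` iff `IsBroomB α B`.
`B_0 = {{∅}}`; for odd `α`, `B_α = B_{<α} ∪ {h⌢B | B ∈ B_{α-1}, h ∈ ω^{<ω}}`; for even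
`α > 0`, `B_α = B_{<α} ∪ {⋃_n f_n⌢B_n | B_n ∈ B_{<α}, (f_n) a forking sequence}`. -/
inductive IsBroomB : Ordinal.{0} → Set (List ℕ) → Prop
  | base : IsBroomB 0 {[]}
  | mono {β α : Ordinal.{0}} {B : Set (List ℕ)} : β < α → IsBroomB β B → IsBroomB α B
  | odd {β : Ordinal.{0}} {B : Set (List ℕ)} (h : List ℕ) : EvenOrd β → IsBroomB β B →
      IsBroomB (β + 1) ((fun s => h ++ s) '' B)
  | even {α : Ordinal.{0}} {f : ℕ → List ℕ} {Bs : ℕ → Set (List ℕ)}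
      (g : ℕ → Ordinal.{0}) :
      0 < α → EvenOrd α → IsForking f →
      (∀ n : ℕ, g n < α) → (∀ n : ℕ, IsBroomB (g n) (Bs n)) →
      IsBroomB α (⋃ n : ℕ, (fun s => f n ++ s) '' Bs n)

/-- The infinite sequence `s⌢ν` obtained by extending the finite sequence `s` by `ν`. -/
def seqAppend (s : List ℕ) (ν : ℕ → ℕ) : ℕ → ℕ :=
  fun k => if h : k < s.length then s.get ⟨k, h⟩ else ν (k - s.length)

/-- `A` is a broom-extension of `B`:
`A = {s⌢f^s_n⌢ν^s_n | s ∈ B, n ∈ ω}` for forking sequences `(f^s_n)_n, s ∈ B`, and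
points `ν^s_n ∈ ω^ω`. -/
def IsBroomExtension (B : Set (List ℕ)) (A : Set (ℕ → ℕ)) : Prop :=
  ∃ (f : List ℕ → ℕ → List ℕ) (ν : List ℕ → ℕ → (ℕ → ℕ)),
    (∀ s ∈ B, IsForking (f s)) ∧
    A = { σ : ℕ → ℕ | ∃ s ∈ B, ∃ n : ℕ, σ = seqAppend (s ++ f s n) (ν s n) }

/-- The hierarchy of infinite broom sets: `A ∈ A_α` iff `A` is a broom-extension of some
`B ∈ B_α`. -/
def IsBroomA (α : Ordinal.{0}) (A : Set (ℕ → ℕ)) : Prop :=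
  ∃ B : Set (List ℕ), IsBroomB α B ∧ IsBroomExtension B A

/-- `u` is a finite initial segment of the infinite sequence `σ`. -/
def InfExtends (u : List ℕ) (σ : ℕ → ℕ) : Prop := seqPrefix σ u.length = u

/-- The tree of all finite initial segments of members of a set of infinite sequences. -/
def clTrInf (S : Set (ℕ → ℕ)) : Set (List ℕ) := { u | ∃ σ ∈ S, InfExtends u σ }

/-- The broom space `T_𝒜` on `ω^ω ∪ {∞}` (with `∞ = none`): every point of `ω^ω` is
isolated, and the neighborhood subbasis at `∞` consists of the complements of single
points of `ω^ω` and of the complements of the sets `A ∈ 𝒜`. -/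
def broomTop (𝒜 : Set (Set (ℕ → ℕ))) : TopologicalSpace (Option (ℕ → ℕ)) :=
  TopologicalSpace.generateFrom
    ({ S | ∃ σ : ℕ → ℕ, S = {Option.some σ} } ∪
     { S | ∃ σ : ℕ → ℕ, S = insert Option.none (Option.some '' ({σ}ᶜ)) } ∪
     { S | ∃ A ∈ 𝒜, S = insert Option.none (Option.some '' Aᶜ) })

/-! Unfolding an admissible map at the root gives
`R_T(C) = C(∅) ∩ ⋂_{(k) ∈ T} ⋃_{|s| = k} R_{T^(k)}(C(s⌢·))`, and every subtree `T^(k)` has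
smaller leaf-rank than `T`. The right bookkeeping is ordinal multiplication on the left:
`2 * (λ + n) = λ + 2n`, `2 * r` is even and `2 * r + 1` is odd, and `r' < r` gives
`2 * r' + 1 < 2 * r`. So induction on the leaf-rank yields `R_T(C) ∈ F_{2 * r_l(T)}`. If the root
has only finitely many successors and `r_l(T) ≤ r + 1`, distributing the finite intersection over
the unions writes `R_T(C)` as a countable union of `F_{2r}`-sets. -/

theorem iInter_iUnion_eq_iUnion_iInter {α ι : Type*} {κ : ι → Type*} (s : ∀ i, κ i → Set α) :
    ⋂ i, ⋃ j, s i j = ⋃ g : ∀ i, κ i, ⋂ i, s i (g i) :=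
  iInf_iSup_eq

theorem OddOrd.ne_zero {a : Ordinal.{0}} (h : OddOrd a) : a ≠ 0 := by
  rintro rfl
  rw [OddOrd, Ordinal.zero_mod] at h
  exact zero_ne_one h

theorem OddOrd.not_evenOrd {a : Ordinal.{0}} (h : OddOrd a) : ¬ EvenOrd a := by
  intro he
  exact zero_ne_one (he.symm.trans h)

theorem evenOrd_two_mul (r : Ordinal.{0}) : EvenOrd (2 * r) :=
  Ordinal.dvd_iff_mod_eq_zero.1 (dvd_mul_right 2 r)

theorem oddOrd_two_mul_add_one (r : Ordinal.{0}) : OddOrd (2 * r + 1) := by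
  rw [OddOrd, Ordinal.mul_add_mod_self]
  exact Ordinal.mod_eq_of_lt one_lt_two

theorem two_mul_add_one_lt_two_mul {r s : Ordinal.{0}} (h : s < r) : 2 * s + 1 < 2 * r :=
  calc 2 * s + 1 < 2 * s + 2 := (add_lt_add_iff_left _).2 one_lt_two
    _ = 2 * (s + 1) := by rw [mul_add, mul_one]
    _ ≤ 2 * r := mul_le_mul_right (Order.add_one_le_of_lt h) 2

theorem two_mul_add_natCast {lam : Ordinal.{0}} (hlam : Order.IsSuccLimit lam ∨ lam = 0)
    (n : ℕ) : 2 * (lam + n) = lam + ((2 * n : ℕ) : Ordinal.{0}) := by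
  have h2 : 2 * lam = lam := by
    rcases hlam with h | rfl
    · exact Ordinal.mul_omega0_dvd two_pos (Ordinal.natCast_lt_omega0 2)
        (Ordinal.isSuccPrelimit_iff_omega0_dvd.1 h.isSuccPrelimit)
    · exact mul_zero 2
  rw [mul_add, h2]
  norm_cast

section FBorelClasses
variable {Y : Type u} [TopologicalSpace Y]

theorem FBorel_eq (a : Ordinal.{0}) :
    FBorel Y a =
      if a = 0 then { F | IsClosed F }
      else if EvenOrd a then
        { S | ∃ f : ℕ → Set Y, (∀ n, ∃ b, ∃ _ : b < a, f n ∈ FBorel Y b) ∧ S = ⋂ n, f n }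
      else
        { S | ∃ f : ℕ → Set Y, (∀ n, ∃ b, ∃ _ : b < a, f n ∈ FBorel Y b) ∧ S = ⋃ n, f n } := by
  rw [FBorel, WellFounded.fix_eq]

theorem FBorel_zero : FBorel Y 0 = { F | IsClosed F } := by
  rw [FBorel_eq, if_pos rfl]

theorem FBorel_mono {a b : Ordinal.{0}} (h : b ≤ a) : FBorel Y b ⊆ FBorel Y a := by
  rcases h.eq_or_lt with rfl | h
  · rfl
  intro S hS
  rw [FBorel_eq, if_neg ((zero_le).trans_lt h).ne']
  split_ifs
  · exact ⟨fun _ => S, fun _ => ⟨b, h, hS⟩, (iInter_const S).symm⟩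
  · exact ⟨fun _ => S, fun _ => ⟨b, h, hS⟩, (iUnion_const S).symm⟩

theorem _root_.IsClosed.mem_FBorel {F : Set Y} (hF : IsClosed F) (a : Ordinal.{0}) :
    F ∈ FBorel Y a :=
  FBorel_mono zero_le (by rwa [FBorel_zero])

theorem iUnion_mem_FBorel {a : Ordinal.{0}} (ha : OddOrd a) {ι : Sort*} [Countable ι]
    {f : ι → Set Y} (hf : ∀ i, ∃ b < a, f i ∈ FBorel Y b) : ⋃ i, f i ∈ FBorel Y a := by
  rw [FBorel_eq, if_neg ha.ne_zero, if_neg ha.not_evenOrd]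
  cases isEmpty_or_nonempty ι with
  | inl _ =>
    exact ⟨fun _ => ∅, fun _ => ⟨0, ha.ne_zero.bot_lt, isClosed_empty.mem_FBorel 0⟩, by simp⟩
  | inr _ =>
    obtain ⟨e, he⟩ := exists_surjective_nat ι
    exact ⟨f ∘ e, fun n => by simpa using hf (e n), (he.iUnion_comp f).symm⟩

theorem iInter_mem_FBorel_of_lt {a : Ordinal.{0}} (ha : EvenOrd a) (ha0 : a ≠ 0) {ι : Sort*}
    [Countable ι] {f : ι → Set Y} (hf : ∀ i, ∃ b < a, f i ∈ FBorel Y b) :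
    ⋂ i, f i ∈ FBorel Y a := by
  rw [FBorel_eq, if_neg ha0, if_pos ha]
  cases isEmpty_or_nonempty ι with
  | inl _ =>
    exact ⟨fun _ => univ, fun _ => ⟨0, ha0.bot_lt, isClosed_univ.mem_FBorel 0⟩, by simp⟩
  | inr _ =>
    obtain ⟨e, he⟩ := exists_surjective_nat ι
    exact ⟨f ∘ e, fun n => by simpa using hf (e n), (he.iInter_comp f).symm⟩

theorem iInter_mem_FBorel {a : Ordinal.{0}} (ha : EvenOrd a) {ι : Type*} [Countable ι]
    {f : ι → Set Y} (hf : ∀ i, f i ∈ FBorel Y a) : ⋂ i, f i ∈ FBorel Y a := by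
  rcases eq_or_ne a 0 with rfl | ha0
  · simp only [FBorel_zero, mem_ofPred_eq] at hf ⊢
    exact isClosed_iInter hf
  simp only [FBorel_eq (a := a), if_neg ha0, if_pos ha, mem_ofPred_eq] at hf
  choose g hg hfg using hf
  have : ⋂ i, f i = ⋂ p : ι × ℕ, g p.1 p.2 := by
    simp only [hfg]
    exact (iInf_prod (f := fun p : ι × ℕ => g p.1 p.2)).symm
  rw [this]
  exact iInter_mem_FBorel_of_lt ha ha0 fun p => by simpa using hg p.1 p.2

theorem inter_mem_FBorel {a : Ordinal.{0}} (ha : EvenOrd a) {s t : Set Y}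
    (hs : s ∈ FBorel Y a) (ht : t ∈ FBorel Y a) : s ∩ t ∈ FBorel Y a := by
  rw [inter_eq_iInter]
  exact iInter_mem_FBorel ha fun b => by cases b <;> assumption

end FBorelClasses

theorem IsTree.nil_mem {T : Set (List ℕ)} (hT : IsTree T) {t : List ℕ} (ht : t ∈ T) :
    [] ∈ T :=
  hT List.nil_prefix ht

theorem IsTree.clTr_eq {T : Set (List ℕ)} (hT : IsTree T) : clTr T = T :=
  Subset.antisymm (fun _ ⟨_, hs, hus⟩ => hT hus hs) fun u hu => ⟨u, hu, List.prefix_refl u⟩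

theorem isTree_subtreeAt {T : Set (List ℕ)} (hT : IsTree T) (t : List ℕ) :
    IsTree (subtreeAt T t) :=
  fun _ _ hsu hu => hT ((List.prefix_append_right_inj t).2 hsu) hu

theorem WellFoundedTree.mono {S T : Set (List ℕ)} (hwf : WellFoundedTree T) (h : S ⊆ T) :
    WellFoundedTree S :=
  fun ⟨σ, hσ⟩ => hwf ⟨σ, fun k => h (hσ k)⟩

theorem WellFoundedTree.subtreeAt_singleton {T : Set (List ℕ)} (hwf : WellFoundedTree T)
    (hT : IsTree T) (k : ℕ) : WellFoundedTree (subtreeAt T [k]) := by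
  rintro ⟨σ, hσ⟩
  refine hwf ⟨fun i => Nat.casesOn i k σ, fun m => ?_⟩
  cases m with
  | zero => exact hT.nil_mem (hσ 0)
  | succ m => simpa [seqPrefix, List.ofFn_succ, subtreeAt] using hσ m

theorem exists_seqPrefix_mem_of_forall_exists_append_singleton {S : Set (List ℕ)}
    (h0 : [] ∈ S) (h : ∀ t ∈ S, ∃ n, t ++ [n] ∈ S) : ∃ σ : ℕ → ℕ, ∀ k, seqPrefix σ k ∈ S := by
  choose! next hnext using h
  let c : ℕ → List ℕ := fun k => Nat.rec [] (fun _ t => t ++ [next t]) k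
  have hc : ∀ k, c k ∈ S := fun k => Nat.rec h0 (fun _ ih => hnext _ ih) k
  refine ⟨fun k => next (c k), fun k => ?_⟩
  suffices seqPrefix (fun k => next (c k)) k = c k from this ▸ hc k
  induction k with
  | zero => rfl
  | succ k ih =>
    simp only [seqPrefix, List.ofFn_succ', List.concat_eq_append] at ih ⊢
    simp [ih, c]

theorem WellFoundedTree.exists_maximal {T : Set (List ℕ)} (hwf : WellFoundedTree T)
    (hT : IsTree T) (hne : T.Nonempty) : ∃ t ∈ T, ∀ s ∈ T, t <+: s → s = t := by
  by_contra! h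
  refine hwf (exists_seqPrefix_mem_of_forall_exists_append_singleton (hT.nil_mem hne.some_mem)
    fun t ht => ?_)
  obtain ⟨s, hs, ⟨w, rfl⟩, hne⟩ := h t ht
  cases w with
  | nil => exact absurd (List.append_nil t) hne
  | cons n w => exact ⟨n, hT ⟨w, by simp⟩ hs⟩

section IterDeriv
variable (D : Set (List ℕ) → Set (List ℕ)) (S : Set (List ℕ))

theorem iterDeriv_zero : iterDeriv D S 0 = clTr S :=
  Ordinal.limitRecOn_zero _ _ _

theorem iterDeriv_add_one (γ : Ordinal.{0}) : iterDeriv D S (γ + 1) = D (iterDeriv D S γ) :=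
  Ordinal.limitRecOn_add_one _ _ _ _

theorem iterDeriv_of_isSuccLimit {γ : Ordinal.{0}} (hγ : Order.IsSuccLimit γ) :
    iterDeriv D S γ = ⋂ β < γ, iterDeriv D S β :=
  Ordinal.limitRecOn_limit _ _ _ _ hγ

theorem iterDeriv_antitone (hD : ∀ S, D S ⊆ S) : Antitone (iterDeriv D S) := by
  intro β γ hβγ
  induction γ using Ordinal.limitRecOn with
  | zero => rw [nonpos_iff_eq_zero.1 hβγ]
  | add_one γ ih =>
    rcases hβγ.eq_or_lt with rfl | hlt
    · rfl
    · rw [iterDeriv_add_one]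
      exact (hD _).trans (ih (Order.lt_add_one_iff.1 hlt))
  | limit γ hγ ih =>
    rcases hβγ.eq_or_lt with rfl | hlt
    · rfl
    · rw [iterDeriv_of_isSuccLimit D S hγ]
      exact biInter_subset_of_mem hlt

end IterDeriv

theorem leafDeriv_subset (T : Set (List ℕ)) : leafDeriv T ⊆ T :=
  fun _ ht => ht.1

theorem isTree_leafDeriv {T : Set (List ℕ)} (hT : IsTree T) : IsTree (leafDeriv T) := by
  rintro s t hst ⟨htT, u, hu, htu, hne⟩
  by_cases hs : s = t
  · exact hs ▸ ⟨htT, u, hu, htu, hne⟩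
  · exact ⟨hT hst htT, t, htT, hst, hs⟩

theorem isTree_iterDeriv_leafDeriv (S : Set (List ℕ)) (γ : Ordinal.{0}) :
    IsTree (iterDeriv leafDeriv S γ) := by
  induction γ using Ordinal.limitRecOn with
  | zero => exact iterDeriv_zero leafDeriv S ▸ fun _ _ hst ⟨v, hv, htv⟩ => ⟨v, hv, hst.trans htv⟩
  | add_one γ ih => exact iterDeriv_add_one leafDeriv S γ ▸ isTree_leafDeriv ih
  | limit γ hγ ih =>
    rw [iterDeriv_of_isSuccLimit _ _ hγ]
    intro s t hst ht
    simp only [mem_iInter] at ht ⊢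
    exact fun β hβ => ih β hβ hst (ht β hβ)

theorem iterDeriv_leafDeriv_subset {T : Set (List ℕ)} (hT : IsTree T)
    (γ : Ordinal.{0}) : iterDeriv leafDeriv T γ ⊆ T := by
  simpa only [iterDeriv_zero, hT.clTr_eq] using
    iterDeriv_antitone leafDeriv T leafDeriv_subset (zero_le : 0 ≤ γ)

theorem iterDeriv_leafDeriv_subtreeAt {T : Set (List ℕ)} (hT : IsTree T)
    (t : List ℕ) (γ : Ordinal.{0}) :
    iterDeriv leafDeriv (subtreeAt T t) γ ⊆ subtreeAt (iterDeriv leafDeriv T γ) t := by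
  induction γ using Ordinal.limitRecOn with
  | zero => rw [iterDeriv_zero, iterDeriv_zero, hT.clTr_eq, (isTree_subtreeAt hT t).clTr_eq]
  | add_one γ ih =>
    rw [iterDeriv_add_one, iterDeriv_add_one]
    rintro u ⟨hu, v, hv, huv, hne⟩
    exact ⟨ih hu, t ++ v, ih hv, (List.prefix_append_right_inj t).2 huv,
      fun h => hne (List.append_cancel_left h)⟩
  | limit γ hγ ih =>
    rw [iterDeriv_of_isSuccLimit _ _ hγ, iterDeriv_of_isSuccLimit _ _ hγ]
    intro u hu
    simp only [subtreeAt, mem_iInter] at hu ⊢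
    exact fun β hβ => ih β hβ (hu β hβ)

theorem exists_lt_omega1_iterDeriv_leafDeriv_add_one_eq_empty {T : Set (List ℕ)}
    (hT : IsTree T) (hwf : WellFoundedTree T) :
    ∃ γ < omega1, iterDeriv leafDeriv T (γ + 1) = ∅ := by
  by_contra! hne
  have hleaf : ∀ γ : Iio omega1,
      ∃ t ∈ iterDeriv leafDeriv T γ, t ∉ iterDeriv leafDeriv T (γ + 1) := by
    rintro ⟨γ, hγ⟩
    obtain ⟨t, ht, hmax⟩ := (hwf.mono (iterDeriv_leafDeriv_subset hT γ)).exists_maximal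
      (isTree_iterDeriv_leafDeriv T γ) ((hne γ hγ).mono
        (iterDeriv_antitone leafDeriv T leafDeriv_subset le_self_add))
    refine ⟨t, ht, ?_⟩
    rw [iterDeriv_add_one]
    exact fun ⟨_, s, hs, hts, hts'⟩ => hts' (hmax s hs hts).symm
  choose t ht_mem ht_not using hleaf
  -- a node removed at stage `γ + 1` survives all earlier stages, so `ω₁` injects into `List ℕ`
  have ht_inj : Function.Injective t := .of_lt_imp_ne fun β γ hβγ heq =>
    ht_not β (heq ▸ iterDeriv_antitone leafDeriv T leafDeriv_subset
      (Order.add_one_le_of_lt hβγ) (ht_mem γ))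
  have hcount : Countable (Iio omega1) := ht_inj.countable
  rw [← Cardinal.mk_le_aleph0_iff, Cardinal.mk_Iio_ordinal, omega1, Ordinal.card_omega,
    Cardinal.lift_le_aleph0] at hcount
  exact Cardinal.aleph0_lt_aleph_one.not_ge hcount

theorem iterDeriv_leafDeriv_leafRank_add_one {T : Set (List ℕ)} (hT : IsTree T)
    (hwf : WellFoundedTree T) : iterDeriv leafDeriv T (leafRank T + 1) = ∅ := by
  have hex := exists_lt_omega1_iterDeriv_leafDeriv_add_one_eq_empty hT hwf
  rw [leafRank, if_pos hex]
  obtain ⟨γ, -, hγ⟩ := hex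
  exact csInf_mem (s := {γ | iterDeriv leafDeriv T (γ + 1) = ∅}) ⟨γ, hγ⟩

theorem iterDeriv_leafDeriv_add_one_nonempty {T : Set (List ℕ)} {γ : Ordinal.{0}}
    (hγ : γ < leafRank T) : (iterDeriv leafDeriv T (γ + 1)).Nonempty := by
  rw [nonempty_iff_ne_empty]
  intro h
  unfold leafRank at hγ
  split_ifs at hγ with hex
  · exact (csInf_le' (show γ ∈ {γ | iterDeriv leafDeriv T (γ + 1) = ∅} from h)).not_gt hγ
  · exact hex ⟨γ, hγ, h⟩

theorem nil_mem_iterDeriv_leafDeriv {T : Set (List ℕ)} (hT : IsTree T) (hnil : [] ∈ T)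
    {γ : Ordinal.{0}} (hγ : γ ≤ leafRank T) : [] ∈ iterDeriv leafDeriv T γ := by
  induction γ using Ordinal.limitRecOn with
  | zero => rwa [iterDeriv_zero, hT.clTr_eq]
  | add_one γ _ =>
    obtain ⟨t, ht⟩ := iterDeriv_leafDeriv_add_one_nonempty (Order.add_one_le_iff.1 hγ)
    exact (isTree_iterDeriv_leafDeriv T _).nil_mem ht
  | limit γ hlim ih =>
    rw [iterDeriv_of_isSuccLimit _ _ hlim]
    exact mem_iInter₂.2 fun β hβ => ih β hβ (hβ.le.trans hγ)

theorem leafRank_subtreeAt_lt {T : Set (List ℕ)} (hT : IsTree T) (hwf : WellFoundedTree T)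
    {k : ℕ} (hk : [k] ∈ T) : leafRank (subtreeAt T [k]) < leafRank T := by
  set r := leafRank (subtreeAt T [k])
  have hkr : [k] ∈ iterDeriv leafDeriv T r := by
    simpa [subtreeAt] using iterDeriv_leafDeriv_subtreeAt hT [k] r
      (nil_mem_iterDeriv_leafDeriv (isTree_subtreeAt hT [k]) (by simpa [subtreeAt]) le_rfl)
  have hnil : [] ∈ iterDeriv leafDeriv T (r + 1) := by
    rw [iterDeriv_add_one]
    exact ⟨(isTree_iterDeriv_leafDeriv T r).nil_mem hkr, [k], hkr, List.nil_prefix, by simp⟩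
  by_contra! hle
  have := iterDeriv_antitone leafDeriv T leafDeriv_subset (add_le_add_left hle 1) hnil
  rwa [iterDeriv_leafDeriv_leafRank_add_one hT hwf] at this

theorem Admissible.apply_cons {T : Set (List ℕ)} {φ : List ℕ → List ℕ} (hφ : Admissible T φ)
    {k : ℕ} {u : List ℕ} (hk : [k] ∈ T) (hu : k :: u ∈ T) :
    φ (k :: u) = φ [k] ++ (φ (k :: u)).drop k := by
  obtain ⟨w, hw⟩ := hφ.1 hk hu ⟨u, rfl⟩
  rw [← hw, List.drop_left' (by simpa using hφ.2 _ hk)]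

theorem Admissible.drop_subtreeAt {T : Set (List ℕ)} {φ : List ℕ → List ℕ}
    (hφ : Admissible T φ) {k : ℕ} (hk : [k] ∈ T) :
    Admissible (subtreeAt T [k]) (fun u => (φ (k :: u)).drop k) := by
  refine ⟨fun u v hu hv huv => ?_, fun u hu => ?_⟩
  · have h : φ (k :: u) <+: φ (k :: v) := hφ.1 hu hv (List.cons_prefix_cons.2 ⟨rfl, huv⟩)
    show (φ (k :: u)).drop k <+: (φ (k :: v)).drop k
    rw [hφ.apply_cons (u := u) hk hu, hφ.apply_cons (u := v) hk hv] at h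
    exact (List.prefix_append_right_inj _).1 h
  · simp [hφ.2 (k :: u) hu]

def glueAtRoot (s : ℕ → List ℕ) (ψ : ℕ → List ℕ → List ℕ) : List ℕ → List ℕ
  | [] => []
  | k :: u => s k ++ ψ k u

theorem admissible_glueAtRoot {T : Set (List ℕ)} (hT : IsTree T) {s : ℕ → List ℕ}
    {ψ : ℕ → List ℕ → List ℕ} (hs : ∀ k, [k] ∈ T → (s k).length = k)
    (hψ : ∀ k, [k] ∈ T → Admissible (subtreeAt T [k]) (ψ k)) :
    Admissible T (glueAtRoot s ψ) := by
  refine ⟨?_, ?_⟩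
  · rintro (_ | ⟨k, u⟩) (_ | ⟨k', v⟩) hu hv huv
    · exact List.nil_prefix
    · exact List.nil_prefix
    · exact absurd (List.prefix_nil.1 huv) (List.cons_ne_nil k u)
    · obtain ⟨rfl, huv'⟩ := List.cons_prefix_cons.1 huv
      exact (List.prefix_append_right_inj _).2 ((hψ k (hT ⟨u, rfl⟩ hu)).1 hu hv huv')
  · rintro (_ | ⟨k, u⟩) hu
    · rfl
    · have hk : [k] ∈ T := hT ⟨u, rfl⟩ hu
      simp [glueAtRoot, hs k hk, (hψ k hk).2 u hu]

theorem RT_eq_inter_iInter_iUnion {Y : Type u} {T : Set (List ℕ)} (hT : IsTree T)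
    (C : List ℕ → Set Y) :
    RT T C = C [] ∩ ⋂ k : {k : ℕ // [k] ∈ T}, ⋃ s : {s : List ℕ // s.length = k},
      RT (subtreeAt T [k]) (fun u => C (s ++ u)) := by
  ext x
  constructor
  · rintro ⟨hx, φ, hφ, hxφ⟩
    refine ⟨hx, mem_iInter.2 fun ⟨k, hk⟩ => mem_iUnion.2
      ⟨⟨φ [k], by rw [hφ.2 _ hk, List.sum_singleton]⟩, ?_⟩⟩
    refine ⟨by simpa using hxφ _ hk, _, hφ.drop_subtreeAt hk, fun u hu => ?_⟩
    show x ∈ C (φ [k] ++ (φ (k :: u)).drop k)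
    rw [← hφ.apply_cons (u := u) hk hu]
    exact hxφ _ hu
  · rintro ⟨hx, hxk⟩
    have : ∀ k, [k] ∈ T → ∃ (s : List ℕ) (ψ : List ℕ → List ℕ), s.length = k ∧
        Admissible (subtreeAt T [k]) ψ ∧ ∀ u ∈ subtreeAt T [k], x ∈ C (s ++ ψ u) := by
      intro k hk
      obtain ⟨⟨s, hs⟩, -, ψ, hψ, hxψ⟩ := mem_iUnion.1 (mem_iInter.1 hxk ⟨k, hk⟩)
      exact ⟨s, ψ, hs, hψ, hxψ⟩
    choose! s ψ hs hψ hxψ using this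
    refine ⟨hx, glueAtRoot s ψ, admissible_glueAtRoot hT hs hψ, ?_⟩
    rintro (_ | ⟨k, u⟩) hu
    · exact hx
    · exact hxψ k (hT ⟨u, rfl⟩ hu) u hu

section Complexity
variable {Y : Type u} [TopologicalSpace Y]

theorem RT_mem_FBorel_two_mul_leafRank {T : Set (List ℕ)} (hT : IsTree T)
    (hwf : WellFoundedTree T) {C : List ℕ → Set Y} (hC : ∀ s, IsClosed (C s)) :
    RT T C ∈ FBorel Y (2 * leafRank T) := by
  induction hr : leafRank T using WellFoundedLT.induction generalizing T C with
  | ind r ih =>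
  rw [RT_eq_inter_iInter_iUnion hT]
  refine inter_mem_FBorel (evenOrd_two_mul r) ((hC []).mem_FBorel _)
    (iInter_mem_FBorel (evenOrd_two_mul r) fun k => ?_)
  have hk : leafRank (subtreeAt T [k]) < r := hr ▸ leafRank_subtreeAt_lt hT hwf k.2
  refine FBorel_mono (two_mul_add_one_lt_two_mul hk).le
    (iUnion_mem_FBorel (oddOrd_two_mul_add_one _) fun s => ⟨_, lt_add_one _, ?_⟩)
  exact ih _ hk (isTree_subtreeAt hT _) (hwf.subtreeAt_singleton hT k) (fun u => hC _) rfl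

theorem RT_mem_FBorel_two_mul_add_one {T : Set (List ℕ)} (hT : IsTree T)
    (hwf : WellFoundedTree T) {C : List ℕ → Set Y} (hC : ∀ s, IsClosed (C s))
    (hfin : {k : ℕ | [k] ∈ T}.Finite) {r : Ordinal.{0}} (hr : leafRank T ≤ r + 1) :
    RT T C ∈ FBorel Y (2 * r + 1) := by
  have : Finite {k : ℕ // [k] ∈ T} := hfin.to_subtype
  rw [RT_eq_inter_iInter_iUnion hT, iInter_iUnion_eq_iUnion_iInter, inter_iUnion]
  refine iUnion_mem_FBorel (oddOrd_two_mul_add_one r) fun g => ⟨2 * r, lt_add_one _,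
    inter_mem_FBorel (evenOrd_two_mul r) ((hC []).mem_FBorel _)
      (iInter_mem_FBorel (evenOrd_two_mul r) fun k => FBorel_mono ?_
        (RT_mem_FBorel_two_mul_leafRank (isTree_subtreeAt hT _) (hwf.subtreeAt_singleton hT k)
          fun u => hC _))⟩
  exact mul_le_mul_right
    (Order.lt_add_one_iff.1 ((leafRank_subtreeAt_lt hT hwf k.2).trans_le hr)) 2

end Complexity

theorem RT_complexity_general (Y : Type u) [TopologicalSpace Y] (C : List ℕ → Set Y)
    (hcl : ∀ s, IsClosed (C s))
    (T : Set (List ℕ)) (hT : IsTree T) (hwf : WellFoundedTree T)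
    (lam : Ordinal.{0}) (n : ℕ) (hlam : Order.IsSuccLimit lam ∨ lam = 0)
    (hrank : leafRank T = lam + (n : Ordinal.{0})) :
    RT T C ∈ FBorel Y (lam + ((2 * n : ℕ) : Ordinal.{0})) ∧
    ({ k : ℕ | [k] ∈ T }.Finite →
      RT T C ∈ FBorel Y (lam + ((2 * n - 1 : ℕ) : Ordinal.{0}))) := by
  have hRT := RT_mem_FBorel_two_mul_leafRank hT hwf hcl
  rw [hrank, two_mul_add_natCast hlam] at hRT
  refine ⟨hRT, fun hfin => ?_⟩
  cases n with
  | zero => simpa using hRT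
  | succ m =>
    have hr : leafRank T ≤ (lam + m) + 1 := by rw [hrank, Nat.cast_succ, add_assoc]
    rw [show 2 * (m + 1) - 1 = 2 * m + 1 by omega, Nat.cast_succ, ← add_assoc,
      ← two_mul_add_natCast hlam]
    exact RT_mem_FBorel_two_mul_add_one hT hwf hcl hfin hr

/-- Complexity of `R_T`-sets: for a closed Suslin scheme `C` in `Y` and
a well-founded tree `T` with `r_l(T) = λ + n` (`λ` limit or zero, `n` finite), `R_T(C)`
is in `F_{λ+2n}(Y)`; and if the root of `T` has only finitely many immediate successors,
`R_T(C)` is in `F_{λ+2n-1}(Y)`. -/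
theorem RT_complexity (Y : Type u) [TopologicalSpace Y] (C : List ℕ → Set Y)
    (hmono : IsSuslinScheme C) (hcl : ∀ s, IsClosed (C s))
    (T : Set (List ℕ)) (hT : IsTree T) (hwf : WellFoundedTree T)
    (lam : Ordinal.{0}) (n : ℕ) (hlam : Order.IsSuccLimit lam ∨ lam = 0)
    (hrank : leafRank T = lam + (n : Ordinal.{0})) :
    RT T C ∈ FBorel Y (lam + ((2 * n : ℕ) : Ordinal.{0})) ∧
    ({ k : ℕ | [k] ∈ T }.Finite →
      RT T C ∈ FBorel Y (lam + ((2 * n - 1 : ℕ) : Ordinal.{0}))) :=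
  RT_complexity_general Y C hcl T hT hwf lam n hlam hrank

end FBorelPaper
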